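/- Let A ⊆ ℝ be a closed nonempty set, let u(x) = √(dist(x,A)), F(x) = ∫₀^x u(y) dy, and define f : ℝ → ℝ³ by f(x) = (x, 0, F(x)), viewed as a curve in the Heisenberg group ℍ¹ (the case n = 1). Then f is continuously differentiable, and for every x ∈ ℝ, θ_{f(x)}(f'(x)) = u(x) = √(dist(x,A)); in particular f'(x) lies in the kernel of θ at f(x) if and only if x ∈ A. -/

import Mathlib

open MeasureTheory

noncomputable section

/-- The contact form `θ` on `ℝ³ = ℍ¹`, at a point `p = (x,y,t)`, evaluated on a tangent
vector `v = (v_x, v_y, v_t)`:  `θ_p(v) = v_t − (1/2)(x v_y − y v_x)`. -/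
def theta1 (p v : ℝ × ℝ × ℝ) : ℝ :=
  v.2.2 - (1 / 2) * (p.1 * v.2.1 - p.2.1 * v.1)

/-- For a closed nonempty `A ⊆ ℝ`, the curve `f(x) = (x, 0, ∫₀ˣ √(dist(y,A)) dy)` in `ℍ¹`
is `C¹`, and `θ_{f(x)}(f'(x)) = √(dist(x,A))`; in particular `f'(x)` lies in the kernel of
`θ` at `f(x)` if and only if `x ∈ A`. -/
theorem stmt13 (A : Set ℝ) (hA : IsClosed A) (hAne : A.Nonempty)
    (f : ℝ → ℝ × ℝ × ℝ)
    (hf : ∀ x : ℝ, f x = (x, 0, ∫ y in (0:ℝ)..x, Real.sqrt (Metric.infDist y A))) :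
    ContDiff ℝ 1 f ∧
    ∀ x : ℝ,
      theta1 (f x) (deriv f x) = Real.sqrt (Metric.infDist x A) ∧
      (theta1 (f x) (deriv f x) = 0 ↔ x ∈ A) := by
  have hfe : f = fun x => (x, (0:ℝ), ∫ y in (0:ℝ)..x, Real.sqrt (Metric.infDist y A)) :=
    funext hf
  set u : ℝ → ℝ := fun y => Real.sqrt (Metric.infDist y A) with hu
  have hucont : Continuous u :=
    Real.continuous_sqrt.comp (Metric.continuous_infDist_pt A)
  have hF : ∀ x, HasDerivAt (fun x => ∫ y in (0:ℝ)..x, u y) (u x) x := fun x =>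
    (hucont.integral_hasStrictDerivAt 0 x).hasDerivAt
  have hderiv : ∀ x, HasDerivAt f (1, 0, u x) x := by
    intro x
    rw [hfe]
    exact (hasDerivAt_id x).prodMk ((hasDerivAt_const x (0:ℝ)).prodMk (hF x))
  have hcd : ContDiff ℝ 1 f := by
    rw [contDiff_one_iff_deriv]
    refine ⟨fun x => (hderiv x).differentiableAt, ?_⟩
    have : deriv f = fun x => ((1:ℝ), (0:ℝ), u x) := funext fun x => (hderiv x).deriv
    rw [this]
    exact continuous_const.prodMk (continuous_const.prodMk hucont)
  refine ⟨hcd, fun x => ?_⟩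
  have h1 : theta1 (f x) (deriv f x) = u x := by
    rw [(hderiv x).deriv, hf x]
    simp [theta1]
  refine ⟨h1, ?_⟩
  rw [h1]
  constructor
  · intro h
    have h0 : Metric.infDist x A = 0 := by
      have hle := (Real.sqrt_eq_zero' ..).mp h
      exact le_antisymm hle Metric.infDist_nonneg
    exact (hA.mem_iff_infDist_zero hAne).mpr h0
  · intro h
    simp [hu, Metric.infDist_zero_of_mem h]
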